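/- Let V, W ⊂ ℙⁿ(K̄) be finite Galois-stable sets of equal cardinality N, each containing n+1 linearly independent points, and suppose f(V) = W for some f ∈ PGL_{n+1} defined over the ring of absolute S-integers. Then the discriminant ideals of the associated decomposable forms agree: D_{F_V} = D_{F_W}. In particular D_{F_V} = O_S if and only if D_{F_{f(V)}} = O_S. -/
import Mathlib


open Projectivization
open scoped LinearAlgebra.Projectivization Classical

/-- The projective automorphism of `ℙⁿ(L)` induced by `A ∈ GL_{n+1}(L)`. -/
noncomputable def projAct {L : Type*} [Field L] {n : ℕ} (A : GL (Fin (n + 1)) L) :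
    ℙ L (Fin (n + 1) → L) → ℙ L (Fin (n + 1) → L) :=
  Projectivization.map
    ((Matrix.GeneralLinearGroup.toLin A).toLinearEquiv :
      (Fin (n + 1) → L) →ₗ[L] (Fin (n + 1) → L))
    (Matrix.GeneralLinearGroup.toLin A).toLinearEquiv.injective

/-- The coordinatewise action of `σ ∈ Gal(L/K)` on `L^{n+1}`, as a `σ`-semilinear map. -/
def galSemilinear {K L : Type*} [Field K] [Field L] [Algebra K L] {n : ℕ}
    (σ : L ≃ₐ[K] L) : (Fin (n + 1) → L) →ₛₗ[(σ : L →+* L)] (Fin (n + 1) → L) where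
  toFun v i := σ (v i)
  map_add' u v := by funext i; simp
  map_smul' c v := by funext i; simp

/-- The induced action of `σ ∈ Gal(L/K)` on `ℙⁿ(L)`. -/
noncomputable def galAct {K L : Type*} [Field K] [Field L] [Algebra K L] {n : ℕ}
    (σ : L ≃ₐ[K] L) : ℙ L (Fin (n + 1) → L) → ℙ L (Fin (n + 1) → L) :=
  Projectivization.map (galSemilinear σ) (by
    intro u v huv
    funext i
    exact σ.injective (congrFun huv i))

section Disc

variable (R : Type*) [CommRing R] [IsDomain R]
  {L : Type*} [Field L] [Algebra R L] {n : ℕ}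

/-- The content ideal `(ℓ_P)` of the linear form dual to a point `P ∈ ℙⁿ(L)`: the ideal of
the integral closure `Ō` of `R` in `L` generated by the coefficients of `ℓ_P` (viewed as a
fractional `Ō`-submodule of `L`). -/
noncomputable def contentIdeal (P : ℙ L (Fin (n + 1) → L)) :
    Submodule (integralClosure R L) L :=
  Submodule.span (integralClosure R L) (Set.range P.rep)

/-- The square of the determinant `det(ℓ_{P₀}, …, ℓ_{Pₙ})` of an `(n+1)`-point subset `T`
(of linear forms dual to points); well defined since squaring kills the sign ambiguity of
the ordering. -/
noncomputable def detSq (T : Finset (ℙ L (Fin (n + 1) → L))) : L :=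
  if h : T.card = n + 1 then
    (Matrix.det (Matrix.of fun i j =>
      (((T.equivFinOfCardEq h).symm i : ℙ L (Fin (n + 1) → L))).rep j)) ^ 2
  else 1

/-- The linearly independent `(n+1)`-point subsets of `V`, indexing the product defining
the discriminant. -/
noncomputable def indepSubsets (V : Finset (ℙ L (Fin (n + 1) → L))) :
    Finset (Finset (ℙ L (Fin (n + 1) → L))) :=
  V.powerset.filter fun T => T.card = n + 1 ∧
    LinearIndependent L (fun P : T => (P : ℙ L (Fin (n + 1) → L)).rep)

/-- Numerator of the discriminant ideal `D_{F_V}`: the product of the ideals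
`(det(ℓ_{i₀}, …, ℓ_{iₙ})²)` over linearly independent `(n+1)`-subsets. -/
noncomputable def discNum (V : Finset (ℙ L (Fin (n + 1) → L))) :
    Submodule (integralClosure R L) L :=
  ∏ T ∈ indepSubsets V, Submodule.span (integralClosure R L) {detSq T}

/-- Denominator of the discriminant ideal `D_{F_V}`: the product of the ideals
`((ℓ_{i₀}) ⋯ (ℓ_{iₙ}))²` over linearly independent `(n+1)`-subsets, so that
`D_{F_V} = discNum V / discDen V`. -/
noncomputable def discDen (V : Finset (ℙ L (Fin (n + 1) → L))) :
    Submodule (integralClosure R L) L :=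
  ∏ T ∈ indepSubsets V, (∏ P ∈ T, contentIdeal R P) ^ 2

end Disc


section AuxProof

variable {L : Type*} [Field L] {n : ℕ}

lemma mulVec_ne_zero (A : GL (Fin (n+1)) L) {v : Fin (n+1) → L} (hv : v ≠ 0) :
    (A : Matrix (Fin (n+1)) (Fin (n+1)) L).mulVec v ≠ 0 := by
  intro h
  apply hv
  have := congrArg (((A⁻¹ : GL (Fin (n+1)) L) : Matrix (Fin (n+1)) (Fin (n+1)) L).mulVec) h
  rwa [Matrix.mulVec_mulVec, Matrix.mulVec_zero, ← Matrix.GeneralLinearGroup.coe_mul,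
    inv_mul_cancel, Matrix.GeneralLinearGroup.coe_one, Matrix.one_mulVec] at this

lemma projAct_mk (A : GL (Fin (n+1)) L) (v : Fin (n+1) → L) (hv : v ≠ 0) :
    projAct A (Projectivization.mk L v hv)
      = Projectivization.mk L ((A : Matrix (Fin (n+1)) (Fin (n+1)) L).mulVec v)
        (mulVec_ne_zero A hv) := rfl

lemma projAct_eq_mk (A : GL (Fin (n+1)) L) (P : ℙ L (Fin (n+1) → L)) :
    projAct A P = Projectivization.mk L ((A : Matrix (Fin (n+1)) (Fin (n+1)) L).mulVec P.rep)
      (mulVec_ne_zero A P.rep_nonzero) := by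
  conv_lhs => rw [← P.mk_rep]
  rfl

lemma projAct_injective (A : GL (Fin (n+1)) L) : Function.Injective (projAct A) :=
  Projectivization.map_injective _ _

lemma projAct_inv_apply (A : GL (Fin (n+1)) L) (P : ℙ L (Fin (n+1) → L)) :
    projAct A⁻¹ (projAct A P) = P := by
  induction P using Projectivization.ind with
  | h v hv =>
    rw [projAct_mk, projAct_mk]
    congr 1
    rw [Matrix.mulVec_mulVec, ← Matrix.GeneralLinearGroup.coe_mul, inv_mul_cancel,
      Matrix.GeneralLinearGroup.coe_one, Matrix.one_mulVec]

lemma exists_smul_rep (A : GL (Fin (n+1)) L) (P : ℙ L (Fin (n+1) → L)) :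
    ∃ a : Lˣ, (projAct A P).rep
      = (a : L) • (A : Matrix (Fin (n+1)) (Fin (n+1)) L).mulVec P.rep := by
  have h := projAct_eq_mk A P
  obtain ⟨a, ha⟩ :=
    Projectivization.exists_smul_eq_mk_rep L _ (mulVec_ne_zero A P.rep_nonzero)
  exact ⟨a, by rw [h, ← ha]; rfl⟩

/-- The scalar relating the canonical representative of `projAct A P` to `A · P.rep`. -/
noncomputable def tA (A : GL (Fin (n+1)) L) (P : ℙ L (Fin (n+1) → L)) : Lˣ :=
  Classical.choose (exists_smul_rep A P)

lemma tA_spec (A : GL (Fin (n+1)) L) (P : ℙ L (Fin (n+1) → L)) :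
    (projAct A P).rep
      = ((tA A P : L)) • (A : Matrix (Fin (n+1)) (Fin (n+1)) L).mulVec P.rep :=
  Classical.choose_spec (exists_smul_rep A P)

set_option linter.unusedSectionVars false
set_option maxHeartbeats 1000000

variable (R : Type*) [CommRing R] [IsDomain R] [Algebra R L]

lemma span_singleton_mul_singleton (a b : L) :
    Submodule.span (integralClosure R L) {a} * Submodule.span (integralClosure R L) {b}
      = Submodule.span (integralClosure R L) {a * b} := by
  rw [Submodule.span_mul_span, Set.singleton_mul_singleton]

lemma span_unit_mul {u w : L} (hu : u ∈ integralClosure R L) (hw : w ∈ integralClosure R L)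
    (huw : u * w = 1) (x : L) :
    Submodule.span (integralClosure R L) {u * x} = Submodule.span (integralClosure R L) {x} := by
  apply le_antisymm
  · rw [Submodule.span_le, Set.singleton_subset_iff]
    have h : u * x = (⟨u, hu⟩ : integralClosure R L) • x := rfl
    rw [h]
    exact Submodule.smul_mem _ _ (Submodule.subset_span (Set.mem_singleton _))
  · rw [Submodule.span_le, Set.singleton_subset_iff]
    have hmem : (⟨w, hw⟩ : integralClosure R L) • (u * x)
        ∈ Submodule.span (integralClosure R L) {u * x} :=
      Submodule.smul_mem _ _ (Submodule.subset_span (Set.mem_singleton _))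
    have h : (⟨w, hw⟩ : integralClosure R L) • (u * x) = x := by
      show w * (u * x) = x
      rw [← mul_assoc, mul_comm w u, huw, one_mul]
    rwa [h] at hmem

lemma det_mem_integralClosure (A : Matrix (Fin (n+1)) (Fin (n+1)) L)
    (hA : ∀ i j, A i j ∈ integralClosure R L) : A.det ∈ integralClosure R L := by
  have h : A = (algebraMap (integralClosure R L) L).mapMatrix
      (Matrix.of fun i j => (⟨A i j, hA i j⟩ : integralClosure R L)) := by
    ext i j; rfl
  rw [h, ← RingHom.map_det]
  exact SetLike.coe_mem _

lemma det_mul_det_inv (A : GL (Fin (n+1)) L) :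
    (A : Matrix (Fin (n+1)) (Fin (n+1)) L).det
      * ((A⁻¹ : GL (Fin (n+1)) L) : Matrix (Fin (n+1)) (Fin (n+1)) L).det = 1 := by
  rw [← Matrix.det_mul, ← Matrix.GeneralLinearGroup.coe_mul, mul_inv_cancel,
    Matrix.GeneralLinearGroup.coe_one, Matrix.det_one]

lemma span_range_mulVec_le (M : Matrix (Fin (n+1)) (Fin (n+1)) L)
    (hM : ∀ i j, M i j ∈ integralClosure R L) (v : Fin (n+1) → L) :
    Submodule.span (integralClosure R L) (Set.range (M.mulVec v))
      ≤ Submodule.span (integralClosure R L) (Set.range v) := by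
  rw [Submodule.span_le]
  rintro _ ⟨i, rfl⟩
  show M.mulVec v i ∈ _
  have h : M.mulVec v i = ∑ j, (⟨M i j, hM i j⟩ : integralClosure R L) • v j := by
    simp [Matrix.mulVec, dotProduct]
    rfl
  rw [h]
  exact Submodule.sum_mem _ fun j _ =>
    Submodule.smul_mem _ _ (Submodule.subset_span ⟨j, rfl⟩)

lemma span_range_mulVec_eq (A : GL (Fin (n+1)) L)
    (hA : ∀ i j, (A : Matrix (Fin (n + 1)) (Fin (n + 1)) L) i j ∈ integralClosure R L)
    (hAinv : ∀ i j,
      ((A⁻¹ : GL (Fin (n + 1)) L) : Matrix (Fin (n + 1)) (Fin (n + 1)) L) i j ∈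
        integralClosure R L) (v : Fin (n+1) → L) :
    Submodule.span (integralClosure R L)
        (Set.range ((A : Matrix (Fin (n+1)) (Fin (n+1)) L).mulVec v))
      = Submodule.span (integralClosure R L) (Set.range v) := by
  refine le_antisymm (span_range_mulVec_le R _ hA v) ?_
  have h := span_range_mulVec_le R _ hAinv
    ((A : Matrix (Fin (n+1)) (Fin (n+1)) L).mulVec v)
  rwa [Matrix.mulVec_mulVec, ← Matrix.GeneralLinearGroup.coe_mul, inv_mul_cancel,
    Matrix.GeneralLinearGroup.coe_one, Matrix.one_mulVec] at h

lemma span_range_unit_smul (c : Lˣ) (v : Fin (n+1) → L) :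
    Submodule.span (integralClosure R L) (Set.range ((c : L) • v))
      = Submodule.span (integralClosure R L) {(c : L)}
        * Submodule.span (integralClosure R L) (Set.range v) := by
  rw [Submodule.span_mul_span, Set.singleton_mul]
  congr 1
  ext x
  simp [Set.range_comp, Pi.smul_apply]

lemma contentIdeal_projAct (A : GL (Fin (n+1)) L)
    (hA : ∀ i j, (A : Matrix (Fin (n + 1)) (Fin (n + 1)) L) i j ∈ integralClosure R L)
    (hAinv : ∀ i j,
      ((A⁻¹ : GL (Fin (n + 1)) L) : Matrix (Fin (n + 1)) (Fin (n + 1)) L) i j ∈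
        integralClosure R L) (P : ℙ L (Fin (n + 1) → L)) :
    contentIdeal R (projAct A P)
      = Submodule.span (integralClosure R L) {((tA A P : Lˣ) : L)} * contentIdeal R P := by
  have h := tA_spec A P
  unfold contentIdeal
  conv_lhs => rw [h]
  rw [span_range_unit_smul, span_range_mulVec_eq R A hA hAinv]

lemma detSq_image (A : GL (Fin (n+1)) L) (T : Finset (ℙ L (Fin (n + 1) → L)))
    (hT : T.card = n + 1) :
    detSq (T.image (projAct A))
      = (((A : Matrix (Fin (n+1)) (Fin (n+1)) L).det * ∏ P ∈ T, (tA A P : L)) ^ 2)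
        * detSq T := by
  classical
  have hinj := projAct_injective A
  have hcard' : (T.image (projAct A)).card = n + 1 := by
    rw [Finset.card_image_of_injective _ hinj, hT]
  rw [detSq, detSq, dif_pos hT, dif_pos hcard']
  set e := T.equivFinOfCardEq hT with he
  set e' := (T.image (projAct A)).equivFinOfCardEq hcard' with he'
  have gbij : Function.Bijective (fun p : {x // x ∈ T} =>
      (⟨projAct A p, Finset.mem_image_of_mem _ p.2⟩ : {y // y ∈ T.image (projAct A)})) := by
    constructor
    · intro p q h
      exact Subtype.ext (hinj (Subtype.ext_iff.1 h))
    · rintro ⟨y, hy⟩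
      obtain ⟨x, hx, rfl⟩ := Finset.mem_image.1 hy
      exact ⟨⟨x, hx⟩, rfl⟩
  set g := Equiv.ofBijective _ gbij with hg
  set σ : Equiv.Perm (Fin (n+1)) := (e.symm.trans g).trans e' with hσdef
  have hσ : ∀ i, ((e'.symm (σ i) : {y // y ∈ T.image (projAct A)}) : ℙ L (Fin (n+1) → L))
      = projAct A ((e.symm i : {x // x ∈ T}) : ℙ L (Fin (n+1) → L)) := by
    intro i
    have h : e'.symm (σ i) = g (e.symm i) := by simp [hσdef]
    rw [h]
    rfl
  set M : Matrix (Fin (n+1)) (Fin (n+1)) L :=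
    Matrix.of fun i j => ((e.symm i : {x // x ∈ T}) : ℙ L (Fin (n+1) → L)).rep j with hM
  set M' : Matrix (Fin (n+1)) (Fin (n+1)) L :=
    Matrix.of fun i j =>
      ((e'.symm i : {y // y ∈ T.image (projAct A)}) : ℙ L (Fin (n+1) → L)).rep j with hM'
  have hsub : M'.submatrix σ id
      = (Matrix.diagonal (fun i =>
            (tA A ((e.symm i : {x // x ∈ T}) : ℙ L (Fin (n+1) → L)) : L)) * M)
          * (A : Matrix (Fin (n+1)) (Fin (n+1)) L).transpose := by
    ext i j
    rw [Matrix.submatrix_apply, Matrix.mul_apply]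
    simp only [Matrix.diagonal_mul, Matrix.transpose_apply, hM', Matrix.of_apply, id_eq]
    rw [hσ i, tA_spec]
    simp only [Pi.smul_apply, smul_eq_mul, Matrix.mulVec, dotProduct, hM,
      Matrix.of_apply]
    rw [Finset.mul_sum]
    exact Finset.sum_congr rfl fun k _ => by ring
  have hdetsub := Matrix.det_permute σ M'
  rw [hsub, Matrix.det_mul, Matrix.det_mul, Matrix.det_diagonal,
    Matrix.det_transpose] at hdetsub
  have hsq := congrArg (· ^ 2) hdetsub
  simp only [mul_pow] at hsq
  have hsign : ((Equiv.Perm.sign σ : ℤ) : L) ^ 2 = 1 := by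
    rcases Int.units_eq_one_or (Equiv.Perm.sign σ) with h | h <;> simp [h]
  rw [hsign, one_mul] at hsq
  have hprod : (∏ i, (tA A ((e.symm i : {x // x ∈ T}) : ℙ L (Fin (n+1) → L)) : L))
      = ∏ P ∈ T, (tA A P : L) := by
    rw [← Finset.prod_coe_sort T fun P => (tA A P : L)]
    exact Equiv.prod_comp e.symm fun P => (tA A ((P : {x // x ∈ T}) : ℙ L (Fin (n+1) → L)) : L)
  rw [← hsq, hprod]
  ring

lemma image_mem_indepSubsets (A : GL (Fin (n+1)) L) (V : Finset (ℙ L (Fin (n + 1) → L)))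
    {T : Finset (ℙ L (Fin (n + 1) → L))} (hT : T ∈ indepSubsets V) :
    T.image (projAct A) ∈ indepSubsets (V.image (projAct A)) := by
  classical
  have hinj := projAct_injective A
  rw [indepSubsets, Finset.mem_filter, Finset.mem_powerset] at hT ⊢
  obtain ⟨hTV, hTcard, hTind⟩ := hT
  refine ⟨Finset.image_subset_image hTV, ⟨by
    rw [Finset.card_image_of_injective _ hinj]; exact hTcard, ?_⟩⟩
  have gbij : Function.Bijective (fun p : {x // x ∈ T} =>
      (⟨projAct A p, Finset.mem_image_of_mem _ p.2⟩ : {y // y ∈ T.image (projAct A)})) := by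
    constructor
    · intro p q h
      exact Subtype.ext (hinj (Subtype.ext_iff.1 h))
    · rintro ⟨y, hy⟩
      obtain ⟨x, hx, rfl⟩ := Finset.mem_image.1 hy
      exact ⟨⟨x, hx⟩, rfl⟩
  rw [← linearIndependent_equiv (Equiv.ofBijective _ gbij)]
  have heq : (fun Q : {y // y ∈ T.image (projAct A)} => (Q : ℙ L (Fin (n+1) → L)).rep)
        ∘ (Equiv.ofBijective _ gbij)
      = fun P : {x // x ∈ T} => (tA A (P : ℙ L (Fin (n+1) → L))) •
          ((⇑((A : Matrix (Fin (n+1)) (Fin (n+1)) L).mulVecLin)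
            ∘ fun Q : {x // x ∈ T} => (Q : ℙ L (Fin (n+1) → L)).rep) P) := by
    funext P
    show (projAct A (P : ℙ L (Fin (n+1) → L))).rep = _
    rw [tA_spec]
    rfl
  rw [heq]
  have hker : LinearMap.ker
      ((A : Matrix (Fin (n+1)) (Fin (n+1)) L).mulVecLin) = ⊥ := by
    rw [LinearMap.ker_eq_bot]
    intro v w h
    have h2 := congrArg
      (((A⁻¹ : GL (Fin (n+1)) L) : Matrix (Fin (n+1)) (Fin (n+1)) L).mulVec) h
    rwa [Matrix.mulVecLin_apply, Matrix.mulVecLin_apply, Matrix.mulVec_mulVec,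
      Matrix.mulVec_mulVec, ← Matrix.GeneralLinearGroup.coe_mul, inv_mul_cancel,
      Matrix.GeneralLinearGroup.coe_one, Matrix.one_mulVec, Matrix.one_mulVec] at h2
  have hbase := hTind.map' ((A : Matrix (Fin (n+1)) (Fin (n+1)) L).mulVecLin) hker
  exact hbase.units_smul fun P => tA A (P : ℙ L (Fin (n+1) → L))

lemma prod_span_units_sq {ι : Type*} (S : Finset ι) (g : ι → Lˣ) :
    (∏ i ∈ S, Submodule.span (integralClosure R L) ({((g i : L)) ^ 2} : Set L))
      = Submodule.span (integralClosure R L) {(((∏ i ∈ S, g i : Lˣ)) : L) ^ 2} := by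
  rw [Submodule.prod_span_singleton]
  congr 1
  rw [Finset.prod_pow, ← Units.coe_prod]

lemma disc_image (A : GL (Fin (n+1)) L)
    (hA : ∀ i j, (A : Matrix (Fin (n + 1)) (Fin (n + 1)) L) i j ∈ integralClosure R L)
    (hAinv : ∀ i j,
      ((A⁻¹ : GL (Fin (n + 1)) L) : Matrix (Fin (n + 1)) (Fin (n + 1)) L) i j ∈
        integralClosure R L) (V : Finset (ℙ L (Fin (n + 1) → L))) :
    ∃ c : Lˣ,
      discNum R (V.image (projAct A))
          = Submodule.span (integralClosure R L) {((c : L)) ^ 2} * discNum R V ∧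
        discDen R (V.image (projAct A))
          = Submodule.span (integralClosure R L) {((c : L)) ^ 2} * discDen R V := by
  classical
  have hinj := projAct_injective A
  have hinj' : ∀ x ∈ indepSubsets V, ∀ y ∈ indepSubsets V,
      Finset.image (projAct A) x = Finset.image (projAct A) y → x = y :=
    fun x _ y _ h => Finset.image_injective hinj h
  have hffinv : projAct A ∘ projAct A⁻¹ = id := by
    funext Q
    have h := projAct_inv_apply A⁻¹ Q
    rwa [inv_inv] at h
  have hfinvf : projAct A⁻¹ ∘ projAct A = id := funext fun P => projAct_inv_apply A P
  have hIS : indepSubsets (V.image (projAct A))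
      = (indepSubsets V).image (Finset.image (projAct A)) := by
    ext T'
    simp only [Finset.mem_image]
    constructor
    · intro h
      refine ⟨T'.image (projAct A⁻¹), ?_, ?_⟩
      · have h2 := image_mem_indepSubsets A⁻¹ _ h
        rwa [Finset.image_image, hfinvf, Finset.image_id] at h2
      · rw [Finset.image_image, hffinv, Finset.image_id]
    · rintro ⟨T, hT, rfl⟩
      exact image_mem_indepSubsets A V hT
  have hdet2mem : ((A : Matrix (Fin (n+1)) (Fin (n+1)) L).det) ^ 2 ∈ integralClosure R L :=
    pow_mem (det_mem_integralClosure R _ hA) 2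
  have hdetinv2mem :
      (((A⁻¹ : GL (Fin (n+1)) L) : Matrix (Fin (n+1)) (Fin (n+1)) L).det) ^ 2
        ∈ integralClosure R L :=
    pow_mem (det_mem_integralClosure R _ hAinv) 2
  have hdetmul : ((A : Matrix (Fin (n+1)) (Fin (n+1)) L).det) ^ 2
      * (((A⁻¹ : GL (Fin (n+1)) L) : Matrix (Fin (n+1)) (Fin (n+1)) L).det) ^ 2 = 1 := by
    rw [← mul_pow, det_mul_det_inv, one_pow]
  have hnumfac : ∀ T ∈ indepSubsets V,
      Submodule.span (integralClosure R L) {detSq (T.image (projAct A))}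
        = Submodule.span (integralClosure R L)
            {(((∏ P ∈ T, tA A P : Lˣ)) : L) ^ 2}
          * Submodule.span (integralClosure R L) {detSq T} := by
    intro T hT
    have hTcard : T.card = n + 1 := ((Finset.mem_filter.1 hT).2).1
    rw [detSq_image A T hTcard]
    have h : ((A : Matrix (Fin (n+1)) (Fin (n+1)) L).det * ∏ P ∈ T, (tA A P : L)) ^ 2
          * detSq T
        = ((A : Matrix (Fin (n+1)) (Fin (n+1)) L).det) ^ 2
          * ((((∏ P ∈ T, tA A P : Lˣ)) : L) ^ 2 * detSq T) := by
      rw [Units.coe_prod]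
      ring
    rw [h, span_unit_mul R hdet2mem hdetinv2mem hdetmul,
      ← span_singleton_mul_singleton]
  have hdenfac : ∀ T ∈ indepSubsets V,
      (∏ Q ∈ T.image (projAct A), contentIdeal R Q) ^ 2
        = Submodule.span (integralClosure R L)
            {(((∏ P ∈ T, tA A P : Lˣ)) : L) ^ 2}
          * (∏ P ∈ T, contentIdeal R P) ^ 2 := by
    intro T hT
    rw [Finset.prod_image (fun x _ y _ h => hinj h)]
    rw [Finset.prod_congr rfl (fun P _ => contentIdeal_projAct R A hA hAinv P),
      Finset.prod_mul_distrib, Submodule.prod_span_singleton, mul_pow]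
    congr 1
    rw [pow_two, span_singleton_mul_singleton, ← pow_two, ← Units.coe_prod]
  refine ⟨∏ T ∈ indepSubsets V, ∏ P ∈ T, tA A P, ?_, ?_⟩
  · rw [discNum, discNum, hIS, Finset.prod_image hinj',
      Finset.prod_congr rfl hnumfac, Finset.prod_mul_distrib,
      prod_span_units_sq]
  · rw [discDen, discDen, hIS, Finset.prod_image hinj',
      Finset.prod_congr rfl hdenfac, Finset.prod_mul_distrib,
      prod_span_units_sq]

end AuxProof

/-- Let `V, W ⊂ ℙⁿ(K̄)` be finite `Gal(K̄/K)`-stable sets of equal cardinality `N`, each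
containing `n+1` linearly independent points, and suppose `f(V) = W` for some
`f ∈ PGL_{n+1}` defined over the absolute `S`-integers `Ō_S` (i.e. induced by a matrix
whose entries, and whose inverse's entries, are integral over `O_S = R`).  Then the
discriminant ideals of the associated decomposable forms agree:
`D_{F_V} = D_{F_W}` (stated multiplicatively, `D = discNum/discDen`); in particular
`D_{F_V} = O_S` iff `D_{F_{f(V)}} = O_S`. -/
theorem disc_invariant_under_integral_pgl
    {R : Type*} [CommRing R] [IsDomain R] [IsDedekindDomain R]
    {K : Type*} [Field K] [Algebra R K] [IsFractionRing R K]
    {L : Type*} [Field L] [Algebra K L] [IsAlgClosure K L]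
    [Algebra R L] [IsScalarTower R K L] {n N : ℕ}
    (V W : Finset (ℙ L (Fin (n + 1) → L)))
    (hVcard : V.card = N) (hWcard : W.card = N)
    (hVgal : ∀ σ : L ≃ₐ[K] L, galAct σ '' ↑V = (↑V : Set (ℙ L (Fin (n + 1) → L))))
    (hWgal : ∀ σ : L ≃ₐ[K] L, galAct σ '' ↑W = (↑W : Set (ℙ L (Fin (n + 1) → L))))
    (hVind : (indepSubsets V).Nonempty) (hWind : (indepSubsets W).Nonempty)
    (A : GL (Fin (n + 1)) L)
    (hA : ∀ i j, (A : Matrix (Fin (n + 1)) (Fin (n + 1)) L) i j ∈ integralClosure R L)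
    (hAinv : ∀ i j,
      ((A⁻¹ : GL (Fin (n + 1)) L) : Matrix (Fin (n + 1)) (Fin (n + 1)) L) i j ∈
        integralClosure R L)
    (himg : projAct A '' ↑V = (↑W : Set (ℙ L (Fin (n + 1) → L)))) :
    discNum R V * discDen R W = discNum R W * discDen R V ∧
      (discNum R V = discDen R V ↔ discNum R W = discDen R W) := by
  classical
  have hW : W = V.image (projAct A) := by
    apply Finset.coe_injective
    rw [Finset.coe_image, himg]
  obtain ⟨c, hnum, hden⟩ := disc_image R A hA hAinv V
  rw [hW, hnum, hden]
  constructor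
  · ring
  · have hcancel : ∀ M : Submodule (integralClosure R L) L,
        Submodule.span (integralClosure R L) {(((c⁻¹ : Lˣ)) : L) ^ 2}
          * (Submodule.span (integralClosure R L) {((c : L)) ^ 2} * M) = M := by
      intro M
      rw [← mul_assoc, span_singleton_mul_singleton]
      have h1 : (((c⁻¹ : Lˣ)) : L) ^ 2 * ((c : L)) ^ 2 = 1 := by
        rw [← mul_pow, Units.inv_mul, one_pow]
      rw [h1, ← Submodule.one_eq_span, one_mul]
    constructor
    · intro h
      rw [h]
    · intro h
      calc discNum R V
          = Submodule.span (integralClosure R L) {(((c⁻¹ : Lˣ)) : L) ^ 2}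
            * (Submodule.span (integralClosure R L) {((c : L)) ^ 2} * discNum R V) :=
          (hcancel _).symm
        _ = Submodule.span (integralClosure R L) {(((c⁻¹ : Lˣ)) : L) ^ 2}
            * (Submodule.span (integralClosure R L) {((c : L)) ^ 2} * discDen R V) := by
          rw [h]
        _ = discDen R V := hcancel _
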